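/- Let n, m be nonnegative integers with n + m ≥ 1 and write z = (x,y) ∈ [0,∞)^n × ℝ^m. Let a(z) be a symmetric (n+m)×(n+m) matrix satisfying the structural condition a_{ij}(z) = δ_{ij} α_{ii}(z) + √(x_i x_j) ᾱ_{ij}(z) for 1 ≤ i,j ≤ n and a_{i,n+l}(z) = a_{n+l,i}(z) = ½ c_{il}(z) √(x_i), together with the strict ellipticity condition with constant λ > 0 over all index sets I ⊆ {1,…,n}. Fix r_0 ∈ (0,1) and let Ā_{r_0} := {z = (x,y) : x_k ∈ [0,r_0] for all k = 1,…,n}. Then for every z ∈ Ā_{r_0}, ξ ∈ ℝ^n and η ∈ ℝ^m, the quadratic form Q(ξ,η) := Σ_{i,j=1}^n a_{ij}(z)ξ_iξ_j + Σ_{i=1}^n Σ_{l=1}^m (a_{i,n+l}(z)+a_{n+l,i}(z))ξ_iη_l + Σ_{l,k=1}^m a_{n+l,n+k}(z)η_lη_k satisfies Q(ξ,η) ≥ λ(Σ_{i=1}^n x_i ξ_i² + |η|²) + Σ_{i=1}^n (1 − x_i) α_{ii}(z) ξ_i². In particular, if in addition α_{ii}(z) ≥ λ for all i = 1,…,n and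 all z ∈ Ā_{r_0}, then Q(ξ,η) ≥ (1 − r_0) λ (|ξ|² + |η|²), i.e. a(z) is uniformly strictly positive definite on Ā_{r_0}. -/

import Mathlib

open Matrix Finset

/-! At a point with all `x i ≤ 1` the ellipticity condition for `I = univ` applies. Evaluated at
`ζ i = √(x i) * ξ i`, its right-hand side is exactly the quadratic form of `a` at `(ξ, η)` with
the diagonal part `Σ α i ξ i ^ 2` replaced by `Σ x i α i ξ i ^ 2`, and its left-hand side is
`lam (Σ x i ξ i ^ 2 + |η| ^ 2)`. When moreover `α i ≥ lam`, the missing diagonal part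
`Σ (1 - x i) α i ξ i ^ 2` makes up for the weights `x i`. -/

theorem closure_setOf_forall_fst_mem_Ioo {ι E : Type*} [TopologicalSpace E] {a b : ℝ}
    (hab : a < b) :
    closure {q : (ι → ℝ) × E | ∀ i, q.1 i ∈ Set.Ioo a b}
      = {q : (ι → ℝ) × E | ∀ i, q.1 i ∈ Set.Icc a b} := by
  have hprod (s : Set ℝ) : {q : (ι → ℝ) × E | ∀ i, q.1 i ∈ s}
      = (Set.univ.pi fun _ => s) ×ˢ Set.univ := by
    ext q; simp
  rw [hprod, hprod, closure_prod_eq, closure_pi_set, closure_Ioo hab.ne, closure_univ]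

section BlockForm

variable {ι κ : Type*} [Fintype ι] [Fintype κ]

def blockQuadraticForm (A : Matrix (ι ⊕ κ) (ι ⊕ κ) ℝ) (ξ : ι → ℝ) (η : κ → ℝ) : ℝ :=
  (∑ i, ∑ j, A (Sum.inl i) (Sum.inl j) * ξ i * ξ j)
    + (∑ i, ∑ l, (A (Sum.inl i) (Sum.inr l) + A (Sum.inr l) (Sum.inl i)) * ξ i * η l)
    + (∑ l, ∑ k, A (Sum.inr l) (Sum.inr k) * η l * η k)

theorem blockQuadraticForm_eq_of_structure [DecidableEq ι] {x α : ι → ℝ} {ᾱ : ι → ι → ℝ}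
    {c : ι → κ → ℝ} {A : Matrix (ι ⊕ κ) (ι ⊕ κ) ℝ} (hx : ∀ i, 0 ≤ x i)
    (hXX : ∀ i j, A (Sum.inl i) (Sum.inl j)
      = (if i = j then α i else 0) + Real.sqrt (x i * x j) * ᾱ i j)
    (hXY : ∀ i l, A (Sum.inl i) (Sum.inr l) = (1 / 2 : ℝ) * c i l * Real.sqrt (x i)
      ∧ A (Sum.inr l) (Sum.inl i) = (1 / 2 : ℝ) * c i l * Real.sqrt (x i))
    (ξ : ι → ℝ) (η : κ → ℝ) :
    blockQuadraticForm A ξ η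
      = (∑ i, α i * ξ i ^ 2)
        + (∑ i, ∑ j, ᾱ i j * (Real.sqrt (x i) * ξ i) * (Real.sqrt (x j) * ξ j))
        + (∑ i, ∑ l, c i l * (Real.sqrt (x i) * ξ i) * η l)
        + (∑ l, ∑ k, A (Sum.inr l) (Sum.inr k) * η l * η k) := by
  have hXX' (i j : ι) : A (Sum.inl i) (Sum.inl j) * ξ i * ξ j
      = (if i = j then α i * ξ i ^ 2 else 0)
        + ᾱ i j * (Real.sqrt (x i) * ξ i) * (Real.sqrt (x j) * ξ j) := by
    rw [hXX, Real.sqrt_mul (hx i)]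
    split_ifs with hij
    · subst hij; ring
    · ring
  have hXY' (i : ι) (l : κ) :
      (A (Sum.inl i) (Sum.inr l) + A (Sum.inr l) (Sum.inl i)) * ξ i * η l
        = c i l * (Real.sqrt (x i) * ξ i) * η l := by
    rw [(hXY i l).1, (hXY i l).2]; ring
  simp only [blockQuadraticForm, hXX', hXY', sum_add_distrib, sum_ite_eq, mem_univ, if_true]

theorem le_blockQuadraticForm_of_ellipticity [DecidableEq ι] {lam : ℝ} {x α : ι → ℝ}
    {ᾱ : ι → ι → ℝ} {c : ι → κ → ℝ} {A : Matrix (ι ⊕ κ) (ι ⊕ κ) ℝ} (hx : ∀ i, 0 ≤ x i)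
    (hXX : ∀ i j, A (Sum.inl i) (Sum.inl j)
      = (if i = j then α i else 0) + Real.sqrt (x i * x j) * ᾱ i j)
    (hXY : ∀ i l, A (Sum.inl i) (Sum.inr l) = (1 / 2 : ℝ) * c i l * Real.sqrt (x i)
      ∧ A (Sum.inr l) (Sum.inl i) = (1 / 2 : ℝ) * c i l * Real.sqrt (x i))
    (hell : ∀ (ζ : ι → ℝ) (η : κ → ℝ),
      lam * ((∑ i, ζ i ^ 2) + ∑ l, η l ^ 2)
        ≤ (∑ i, α i * ζ i ^ 2) + (∑ i, ∑ j, ᾱ i j * ζ i * ζ j)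
          + (∑ i, ∑ l, c i l * ζ i * η l) + (∑ k, ∑ l, A (Sum.inr k) (Sum.inr l) * η k * η l))
    (ξ : ι → ℝ) (η : κ → ℝ) :
    lam * ((∑ i, x i * ξ i ^ 2) + ∑ l, η l ^ 2) + (∑ i, (1 - x i) * α i * ξ i ^ 2)
      ≤ blockQuadraticForm A ξ η := by
  have hsq (i : ι) : (Real.sqrt (x i) * ξ i) ^ 2 = x i * ξ i ^ 2 := by
    rw [mul_pow, Real.sq_sqrt (hx i)]
  have hdiag : ∑ i, α i * ξ i ^ 2
      = (∑ i, (1 - x i) * α i * ξ i ^ 2) + ∑ i, α i * (x i * ξ i ^ 2) := by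
    rw [← sum_add_distrib]
    exact sum_congr rfl fun i _ => by ring
  have h := hell (fun i => Real.sqrt (x i) * ξ i) η
  simp only [hsq] at h
  rw [blockQuadraticForm_eq_of_structure hx hXX hXY, hdiag]
  linarith

end BlockForm

theorem mul_sum_sq_le_of_le_one_of_le {ι : Type*} [Fintype ι] {lam : ℝ} {x α ξ : ι → ℝ}
    (hx : ∀ i, x i ≤ 1) (hα : ∀ i, lam ≤ α i) :
    lam * ∑ i, ξ i ^ 2 ≤ lam * ∑ i, x i * ξ i ^ 2 + ∑ i, (1 - x i) * α i * ξ i ^ 2 := by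
  rw [mul_sum, mul_sum, ← sum_add_distrib]
  gcongr with i
  nlinarith [mul_nonneg (sub_nonneg.2 (hx i)) (mul_nonneg (sub_nonneg.2 (hα i)) (sq_nonneg (ξ i)))]
theorem quadratic_form_lower_bound_near_corner_general
    (n m : ℕ) (lam : ℝ) (hlam : 0 < lam)
    (r₀ : ℝ) (hr₀ : r₀ ∈ Set.Ioo (0 : ℝ) 1)
    (a : ((Fin n → ℝ) × (Fin m → ℝ)) → Matrix (Fin n ⊕ Fin m) (Fin n ⊕ Fin m) ℝ)
    (α : ((Fin n → ℝ) × (Fin m → ℝ)) → Fin n → ℝ)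
    (ᾱ : ((Fin n → ℝ) × (Fin m → ℝ)) → Fin n → Fin n → ℝ)
    (c : ((Fin n → ℝ) × (Fin m → ℝ)) → Fin n → Fin m → ℝ)
    -- structural condition on the entries of `a`
    (h_aXX : ∀ p, (∀ i, 0 ≤ p.1 i) → ∀ i j : Fin n,
      a p (Sum.inl i) (Sum.inl j)
        = (if i = j then α p i else 0) + Real.sqrt (p.1 i * p.1 j) * ᾱ p i j)
    (h_aXY : ∀ p, (∀ i, 0 ≤ p.1 i) → ∀ (i : Fin n) (l : Fin m),
      a p (Sum.inl i) (Sum.inr l) = (1 / 2 : ℝ) * c p i l * Real.sqrt (p.1 i)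
        ∧ a p (Sum.inr l) (Sum.inl i) = (1 / 2 : ℝ) * c p i l * Real.sqrt (p.1 i))
    -- strict ellipticity over the closure of each region `M_I`
    (h_ell : ∀ I : Finset (Fin n),
      ∀ p ∈ closure {q : (Fin n → ℝ) × (Fin m → ℝ) |
        (∀ i ∈ I, q.1 i ∈ Set.Ioo (0 : ℝ) 1) ∧ (∀ i ∉ I, q.1 i ∈ Set.Ioi (1 : ℝ))},
      ∀ (ξ : Fin n → ℝ) (η : Fin m → ℝ),
        lam * ((∑ i, ξ i ^ 2) + ∑ l, η l ^ 2)
          ≤ (∑ i ∈ I, α p i * ξ i ^ 2) + (∑ i ∈ Iᶜ, p.1 i * α p i * ξ i ^ 2)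
            + (∑ i ∈ I, ∑ j ∈ I, ᾱ p i j * ξ i * ξ j)
            + (∑ i ∈ I, ∑ j ∈ Iᶜ, p.1 j * (ᾱ p i j + ᾱ p j i) * ξ i * ξ j)
            + (∑ i ∈ Iᶜ, ∑ j ∈ Iᶜ, p.1 i * p.1 j * ᾱ p i j * ξ i * ξ j)
            + (∑ i ∈ I, ∑ l, c p i l * ξ i * η l)
            + (∑ i ∈ Iᶜ, ∑ l, p.1 i * c p i l * ξ i * η l)
            + (∑ k, ∑ l, a p (Sum.inr k) (Sum.inr l) * η k * η l)) :
    (∀ p : (Fin n → ℝ) × (Fin m → ℝ), (∀ i, 0 ≤ p.1 i ∧ p.1 i ≤ r₀) →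
      ∀ (ξ : Fin n → ℝ) (η : Fin m → ℝ),
        lam * ((∑ i, p.1 i * ξ i ^ 2) + ∑ l, η l ^ 2)
            + (∑ i, (1 - p.1 i) * α p i * ξ i ^ 2)
          ≤ (∑ i, ∑ j, a p (Sum.inl i) (Sum.inl j) * ξ i * ξ j)
            + (∑ i, ∑ l, (a p (Sum.inl i) (Sum.inr l) + a p (Sum.inr l) (Sum.inl i))
                * ξ i * η l)
            + (∑ l, ∑ k, a p (Sum.inr l) (Sum.inr k) * η l * η k)) ∧
    ((∀ p : (Fin n → ℝ) × (Fin m → ℝ), (∀ i, 0 ≤ p.1 i ∧ p.1 i ≤ r₀) →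
        ∀ i, lam ≤ α p i) →
      ∀ p : (Fin n → ℝ) × (Fin m → ℝ), (∀ i, 0 ≤ p.1 i ∧ p.1 i ≤ r₀) →
      ∀ (ξ : Fin n → ℝ) (η : Fin m → ℝ),
        (1 - r₀) * lam * ((∑ i, ξ i ^ 2) + ∑ l, η l ^ 2)
          ≤ (∑ i, ∑ j, a p (Sum.inl i) (Sum.inl j) * ξ i * ξ j)
            + (∑ i, ∑ l, (a p (Sum.inl i) (Sum.inr l) + a p (Sum.inr l) (Sum.inl i))
                * ξ i * η l)
            + (∑ l, ∑ k, a p (Sum.inr l) (Sum.inr k) * η l * η k)) := by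
  obtain ⟨hr₀_pos, hr₀_lt_one⟩ := hr₀
  have bound : ∀ p : (Fin n → ℝ) × (Fin m → ℝ), (∀ i, 0 ≤ p.1 i ∧ p.1 i ≤ r₀) →
      ∀ (ξ : Fin n → ℝ) (η : Fin m → ℝ),
        lam * ((∑ i, p.1 i * ξ i ^ 2) + ∑ l, η l ^ 2) + (∑ i, (1 - p.1 i) * α p i * ξ i ^ 2)
          ≤ blockQuadraticForm (a p) ξ η := by
    intro p hp
    have hx : ∀ i, 0 ≤ p.1 i := fun i => (hp i).1
    refine le_blockQuadraticForm_of_ellipticity hx (h_aXX p hx) (h_aXY p hx) fun ζ η => ?_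
    have hmem : p ∈ closure {q : (Fin n → ℝ) × (Fin m → ℝ) |
        (∀ i ∈ univ, q.1 i ∈ Set.Ioo (0 : ℝ) 1) ∧ (∀ i ∉ univ, q.1 i ∈ Set.Ioi (1 : ℝ))} := by
      simp only [mem_univ, forall_const, not_true_eq_false, false_imp_iff, implies_true,
        and_true]
      rw [closure_setOf_forall_fst_mem_Ioo zero_lt_one]
      exact fun i => ⟨hx i, (hp i).2.trans hr₀_lt_one.le⟩
    simpa only [compl_univ, sum_empty, sum_const_zero, add_zero] using h_ell univ p hmem ζ η
  refine ⟨bound, fun hα p hp ξ η => ?_⟩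
  show _ ≤ blockQuadraticForm (a p) ξ η
  have hS : 0 ≤ (∑ i, ξ i ^ 2) + ∑ l, η l ^ 2 := by positivity
  have hdiag := mul_sum_sq_le_of_le_one_of_le (ξ := ξ)
    (fun i => (hp i).2.trans hr₀_lt_one.le) (hα p hp)
  have hbound := bound p hp ξ η
  linarith [mul_nonneg (mul_nonneg hr₀_pos.le hlam.le) hS]

/-- Under the structural condition on the symmetric matrix `a` and the
strict ellipticity condition with constant `lam > 0`, on the region
`Ā_{r₀} = {(x,y) : 0 ≤ x i ≤ r₀}` (with `r₀ ∈ (0,1)`) the quadratic form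
`Q(ξ,η) = Σ a_{ij} ξ_i ξ_j + Σ (a_{i,n+l} + a_{n+l,i}) ξ_i η_l + Σ a_{n+l,n+k} η_l η_k`
satisfies `Q ≥ lam (Σ x_i ξ_i² + |η|²) + Σ (1 - x_i) α_{ii} ξ_i²`; in particular, if
moreover `α_{ii} ≥ lam` on `Ā_{r₀}`, then `Q ≥ (1 - r₀) lam (|ξ|² + |η|²)`. -/
theorem quadratic_form_lower_bound_near_corner
    (n m : ℕ) (hnm : 1 ≤ n + m) (lam : ℝ) (hlam : 0 < lam)
    (r₀ : ℝ) (hr₀ : r₀ ∈ Set.Ioo (0 : ℝ) 1)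
    (a : ((Fin n → ℝ) × (Fin m → ℝ)) → Matrix (Fin n ⊕ Fin m) (Fin n ⊕ Fin m) ℝ)
    (α : ((Fin n → ℝ) × (Fin m → ℝ)) → Fin n → ℝ)
    (ᾱ : ((Fin n → ℝ) × (Fin m → ℝ)) → Fin n → Fin n → ℝ)
    (c : ((Fin n → ℝ) × (Fin m → ℝ)) → Fin n → Fin m → ℝ)
    -- `a` is symmetric
    (hsymm : ∀ p, (∀ i, 0 ≤ p.1 i) → (a p).IsSymm)
    -- structural condition on the entries of `a`
    (h_aXX : ∀ p, (∀ i, 0 ≤ p.1 i) → ∀ i j : Fin n,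
      a p (Sum.inl i) (Sum.inl j)
        = (if i = j then α p i else 0) + Real.sqrt (p.1 i * p.1 j) * ᾱ p i j)
    (h_aXY : ∀ p, (∀ i, 0 ≤ p.1 i) → ∀ (i : Fin n) (l : Fin m),
      a p (Sum.inl i) (Sum.inr l) = (1 / 2 : ℝ) * c p i l * Real.sqrt (p.1 i)
        ∧ a p (Sum.inr l) (Sum.inl i) = (1 / 2 : ℝ) * c p i l * Real.sqrt (p.1 i))
    -- strict ellipticity over the closure of each region `M_I`
    (h_ell : ∀ I : Finset (Fin n),
      ∀ p ∈ closure {q : (Fin n → ℝ) × (Fin m → ℝ) |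
        (∀ i ∈ I, q.1 i ∈ Set.Ioo (0 : ℝ) 1) ∧ (∀ i ∉ I, q.1 i ∈ Set.Ioi (1 : ℝ))},
      ∀ (ξ : Fin n → ℝ) (η : Fin m → ℝ),
        lam * ((∑ i, ξ i ^ 2) + ∑ l, η l ^ 2)
          ≤ (∑ i ∈ I, α p i * ξ i ^ 2) + (∑ i ∈ Iᶜ, p.1 i * α p i * ξ i ^ 2)
            + (∑ i ∈ I, ∑ j ∈ I, ᾱ p i j * ξ i * ξ j)
            + (∑ i ∈ I, ∑ j ∈ Iᶜ, p.1 j * (ᾱ p i j + ᾱ p j i) * ξ i * ξ j)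
            + (∑ i ∈ Iᶜ, ∑ j ∈ Iᶜ, p.1 i * p.1 j * ᾱ p i j * ξ i * ξ j)
            + (∑ i ∈ I, ∑ l, c p i l * ξ i * η l)
            + (∑ i ∈ Iᶜ, ∑ l, p.1 i * c p i l * ξ i * η l)
            + (∑ k, ∑ l, a p (Sum.inr k) (Sum.inr l) * η k * η l)) :
    (∀ p : (Fin n → ℝ) × (Fin m → ℝ), (∀ i, 0 ≤ p.1 i ∧ p.1 i ≤ r₀) →
      ∀ (ξ : Fin n → ℝ) (η : Fin m → ℝ),
        lam * ((∑ i, p.1 i * ξ i ^ 2) + ∑ l, η l ^ 2)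
            + (∑ i, (1 - p.1 i) * α p i * ξ i ^ 2)
          ≤ (∑ i, ∑ j, a p (Sum.inl i) (Sum.inl j) * ξ i * ξ j)
            + (∑ i, ∑ l, (a p (Sum.inl i) (Sum.inr l) + a p (Sum.inr l) (Sum.inl i))
                * ξ i * η l)
            + (∑ l, ∑ k, a p (Sum.inr l) (Sum.inr k) * η l * η k)) ∧
    ((∀ p : (Fin n → ℝ) × (Fin m → ℝ), (∀ i, 0 ≤ p.1 i ∧ p.1 i ≤ r₀) →
        ∀ i, lam ≤ α p i) →
      ∀ p : (Fin n → ℝ) × (Fin m → ℝ), (∀ i, 0 ≤ p.1 i ∧ p.1 i ≤ r₀) →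
      ∀ (ξ : Fin n → ℝ) (η : Fin m → ℝ),
        (1 - r₀) * lam * ((∑ i, ξ i ^ 2) + ∑ l, η l ^ 2)
          ≤ (∑ i, ∑ j, a p (Sum.inl i) (Sum.inl j) * ξ i * ξ j)
            + (∑ i, ∑ l, (a p (Sum.inl i) (Sum.inr l) + a p (Sum.inr l) (Sum.inl i))
                * ξ i * η l)
            + (∑ l, ∑ k, a p (Sum.inr l) (Sum.inr k) * η l * η k)) :=
  quadratic_form_lower_bound_near_corner_general n m lam hlam r₀ hr₀ a α ᾱ c h_aXX h_aXY h_ell
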